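/- Let f be convex, continuously differentiable on a real Hilbert space, with β-Lipschitz gradient (β > 0). Then for all x, y, ⟨∇f(x) − ∇f(y), x − y⟩ ≥ (1/β)‖∇f(x) − ∇f(y)‖² (Baillon–Haddad / cocoercivity). -/

import Mathlib

/-!
Fix `x` and tilt `f` to `h z = f z - ⟪∇f x, z⟫`. Then `h` is convex with the same
`β`-Lipschitz gradient shifted by `∇f x`, so `∇h x = 0` and `x` minimises `h`. One gradient step
of length `1/β` from `y` decreases `h` by at least `‖∇h y‖² / (2β)` (descent lemma), hence
`f y ≥ f x + ⟪∇f x, y - x⟫ + ‖∇f y - ∇f x‖² / (2β)`. Adding this to the same inequality with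
`x` and `y` exchanged gives cocoercivity.
-/

open scoped RealInnerProductSpace

open AffineMap

section

variable {H : Type*} [NormedAddCommGroup H] [InnerProductSpace ℝ H] [CompleteSpace H]
  {f : H → ℝ} {g : H → H}

theorem HasGradientAt.hasDerivAt_comp_lineMap {g' x y : H} {t : ℝ}
    (hf : HasGradientAt f g' (lineMap x y t)) :
    HasDerivAt (f ∘ lineMap x y) ⟪g', y - x⟫ t := by
  simpa [InnerProductSpace.toDual_apply_apply] using
    hf.hasFDerivAt.comp_hasDerivAt t hasDerivAt_lineMap

theorem HasGradientAt.sub_inner {g' v z : H} (hf : HasGradientAt f g' z) :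
    HasGradientAt (fun w => f w - ⟪v, w⟫) (g' - v) z := by
  rw [hasGradientAt_iff_hasFDerivAt, map_sub]
  exact hf.hasFDerivAt.sub (InnerProductSpace.toDual ℝ H v).hasFDerivAt

theorem ConvexOn.add_inner_le_of_hasGradientAt {s : Set H} {g' x y : H}
    (hf : ConvexOn ℝ s f) (hx : x ∈ s) (hy : y ∈ s) (hg : HasGradientAt f g' x) :
    f x + ⟪g', y - x⟫ ≤ f y := by
  have hφ : ConvexOn ℝ (lineMap (k := ℝ) x y ⁻¹' s) (f ∘ lineMap x y) := hf.comp_affineMap _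
  have hderiv : HasDerivAt (f ∘ lineMap x y) ⟪g', y - x⟫ (0 : ℝ) :=
    HasGradientAt.hasDerivAt_comp_lineMap (by rwa [lineMap_apply_zero])
  have hslope := hφ.le_slope_of_hasDerivAt (by simpa using hx) (by simpa using hy) one_pos hderiv
  simp only [slope_def_field, Function.comp_apply, lineMap_apply_zero, lineMap_apply_one,
    sub_zero, div_one] at hslope
  linarith

theorem le_add_inner_add_of_gradient_lipschitz {β : ℝ}
    (hgrad : ∀ x, HasGradientAt f (g x) x) (hlip : ∀ x y, ‖g x - g y‖ ≤ β * ‖x - y‖)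
    (x y : H) :
    f y ≤ f x + ⟪g x, y - x⟫ + β / 2 * ‖y - x‖ ^ 2 := by
  set d := y - x
  -- `f` minus its quadratic upper model, along the segment from `x` to `y`, is antitone.
  let φ : ℝ → ℝ := fun t => f (lineMap x y t) - t * ⟪g x, d⟫ - β / 2 * t ^ 2 * ‖d‖ ^ 2
  let φ' : ℝ → ℝ := fun t => ⟪g (lineMap x y t), d⟫ - ⟪g x, d⟫ - β * t * ‖d‖ ^ 2
  have hφ : ∀ t, HasDerivAt φ (φ' t) t := by
    intro t
    refine ((((hgrad (lineMap x y t)).hasDerivAt_comp_lineMap).sub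
      ((hasDerivAt_id t).mul_const ⟪g x, d⟫)).sub
      (((hasDerivAt_pow 2 t).const_mul (β / 2)).mul_const (‖d‖ ^ 2))).congr_deriv ?_
    simp only [φ', d]
    ring
  have hφ'_nonpos : ∀ t ∈ interior (Set.Icc (0 : ℝ) 1), φ' t ≤ 0 := by
    intro t ht
    rw [interior_Icc] at ht
    have hseg : ‖lineMap x y t - x‖ = t * ‖d‖ := by
      rw [← vsub_eq_sub, lineMap_vsub_left, vsub_eq_sub, norm_smul, Real.norm_of_nonneg ht.1.le]
    calc φ' t = ⟪g (lineMap x y t) - g x, d⟫ - β * t * ‖d‖ ^ 2 := by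
          simp only [φ', inner_sub_left]
      _ ≤ ‖g (lineMap x y t) - g x‖ * ‖d‖ - β * t * ‖d‖ ^ 2 := by
          gcongr; exact real_inner_le_norm _ _
      _ ≤ β * ‖lineMap x y t - x‖ * ‖d‖ - β * t * ‖d‖ ^ 2 := by
          gcongr; exact hlip _ _
      _ = 0 := by rw [hseg]; ring
  have hanti : AntitoneOn φ (Set.Icc 0 1) :=
    antitoneOn_of_hasDerivWithinAt_nonpos (convex_Icc 0 1)
      (fun t _ => (hφ t).continuousAt.continuousWithinAt)
      (fun t _ => (hφ t).hasDerivWithinAt) hφ'_nonpos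
  have hends := hanti (by simp) (by simp) zero_le_one
  simp only [φ, lineMap_apply_zero, lineMap_apply_one] at hends
  linarith

theorem image_sub_inv_smul_gradient_le {β : ℝ} (hβ : 0 < β)
    (hgrad : ∀ x, HasGradientAt f (g x) x) (hlip : ∀ x y, ‖g x - g y‖ ≤ β * ‖x - y‖)
    (x : H) :
    f (x - β⁻¹ • g x) ≤ f x - (2 * β)⁻¹ * ‖g x‖ ^ 2 := by
  have hstep : x - β⁻¹ • g x - x = -(β⁻¹ • g x) := by abel
  have hdesc := le_add_inner_add_of_gradient_lipschitz hgrad hlip x (x - β⁻¹ • g x)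
  rw [hstep, inner_neg_right, real_inner_smul_right, real_inner_self_eq_norm_sq, norm_neg,
    norm_smul, Real.norm_of_nonneg (inv_nonneg.mpr hβ.le)] at hdesc
  convert hdesc using 1
  field_simp
  ring

theorem ConvexOn.add_inner_add_sq_le_of_gradient_lipschitz {β : ℝ} (hβ : 0 < β)
    (hconv : ConvexOn ℝ Set.univ f) (hgrad : ∀ x, HasGradientAt f (g x) x)
    (hlip : ∀ x y, ‖g x - g y‖ ≤ β * ‖x - y‖) (x y : H) :
    f x + ⟪g x, y - x⟫ + (2 * β)⁻¹ * ‖g y - g x‖ ^ 2 ≤ f y := by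
  set h : H → ℝ := fun z => f z - ⟪g x, z⟫
  have hgrad_h : ∀ z, HasGradientAt h (g z - g x) z := fun z => (hgrad z).sub_inner
  have hconv_h : ConvexOn ℝ Set.univ h :=
    hconv.sub ((innerₛₗ ℝ (g x)).concaveOn convex_univ)
  have hlip_h : ∀ z w, ‖(g z - g x) - (g w - g x)‖ ≤ β * ‖z - w‖ := by
    simpa only [sub_sub_sub_cancel_right] using hlip
  have hmin : h x ≤ h (y - β⁻¹ • (g y - g x)) := by
    simpa using hconv_h.add_inner_le_of_hasGradientAt (Set.mem_univ x) (Set.mem_univ _)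
      (hgrad_h x)
  have hstep := image_sub_inv_smul_gradient_le hβ hgrad_h hlip_h y
  simp only [h, inner_sub_right] at hmin hstep ⊢
  linarith

end

theorem stmt_11 {H : Type*} [NormedAddCommGroup H] [InnerProductSpace ℝ H]
    [CompleteSpace H] (f : H → ℝ) (g : H → H) (β : ℝ) (hβ : 0 < β)
    (hconv : ConvexOn ℝ Set.univ f)
    (hgrad : ∀ x, HasGradientAt f (g x) x)
    (hlip : ∀ x y, ‖g x - g y‖ ≤ β * ‖x - y‖) :
    ∀ x y, ⟪g x - g y, x - y⟫ ≥ (1 / β) * ‖g x - g y‖ ^ 2 := by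
  intro x y
  have hxy := hconv.add_inner_add_sq_le_of_gradient_lipschitz hβ hgrad hlip x y
  have hyx := hconv.add_inner_add_sq_le_of_gradient_lipschitz hβ hgrad hlip y x
  have hsum : ⟪g x - g y, x - y⟫ = -⟪g x, y - x⟫ - ⟪g y, x - y⟫ := by
    rw [inner_sub_left, ← neg_sub x y, inner_neg_right, neg_neg]
  have hhalf : 1 / β = 2 * (2 * β)⁻¹ := by field_simp
  rw [norm_sub_rev] at hxy
  rw [hsum, hhalf]
  linarith
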